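/- Let ϑₙ = π(1 − 2⁻ⁿ), ζₙ = e^{iϑₙ}, and uₙ(z) = Re((ζₙ + z)/(ζₙ − z)) for n ≥ 1. The linear map from ℓ¹ to the space of real-valued functions on 𝔻 sending γ = (γₙ) to u = Σₙ γₙ uₙ is injective; in particular, the functions u₁, u₂, u₃, … are linearly independent over ℝ. -/

import Mathlib

/-!
In terms of Mathlib's Poisson kernel, `uₙ(z) = (1 - |z|²) / |ζₙ - z|²`. Approaching `ζₙ`
radially, at `z = r ζₙ` the `n`-th kernel equals `(1 + r) / (1 - r)`, while every other kernel is
at most `(1 - r²) / (r δ²)`, where `δ > 0` separates `ζₙ` from the other points `ζₘ`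
(it exists because `Re ζₘ = cos ϑₘ` is strictly decreasing in `m`). So if `Σ γₘ uₘ` vanishes
on `𝔻`, then `|γₙ| (1 + r) / (1 - r) ≤ ‖γ‖₁ (1 - r²) / (r δ²)`, and `r → 1` forces `γₙ = 0`.
-/

open Complex MeasureTheory Filter Set

noncomputable section

def unitDisk : Set ℂ := {z : ℂ | ‖z‖ < 1}

/-- `ϑₙ = π(1 - 2⁻⁽ⁿ⁺¹⁾)` (indexing from `n = 0`, so this is the paper's `ϑ_{n+1}`). -/
def theta (n : ℕ) : ℝ := Real.pi * (1 - (1 / 2 : ℝ) ^ (n + 1))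

def zeta (n : ℕ) : ℂ := Complex.exp (theta n * Complex.I)

def uP (n : ℕ) (z : ℂ) : ℝ := ((zeta n + z) / (zeta n - z)).re

lemma poissonKernel_zero_apply (w z : ℂ) :
    poissonKernel 0 w z = (‖z‖ ^ 2 - ‖w‖ ^ 2) / ‖z - w‖ ^ 2 := by
  simp [poissonKernel_def]

lemma poissonKernel_zero_nonneg {w z : ℂ} (hz : ‖z‖ = 1) (hw : ‖w‖ ≤ 1) :
    0 ≤ poissonKernel 0 w z := by
  rw [poissonKernel_zero_apply, hz]
  have := pow_le_one₀ (norm_nonneg w) hw (n := 2)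
  exact div_nonneg (by linarith) (by positivity)

lemma poissonKernel_zero_le {w z : ℂ} (hz : ‖z‖ = 1) (hw : ‖w‖ < 1) :
    poissonKernel 0 w z ≤ (1 + ‖w‖) / (1 - ‖w‖) := by
  simpa [poissonKernel_eq_re_herglotzRieszKernel, herglotzRieszKernel_def] using
    re_herglotzRieszKernel_le (c := 0) (R := 1) (by simpa using hz) (by simpa using hw)

lemma poissonKernel_zero_real_mul_self {z : ℂ} (hz : ‖z‖ = 1) {r : ℝ} (hr : r < 1) :
    poissonKernel 0 (r * z) z = (1 + r) / (1 - r) := by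
  have hr' : (1 - r) ≠ 0 := by linarith
  have : z - r * z = ((1 - r : ℝ) : ℂ) * z := by push_cast; ring
  rw [poissonKernel_zero_apply, this, norm_mul, norm_mul, hz, Complex.norm_real,
    Complex.norm_real, Real.norm_eq_abs, Real.norm_eq_abs, mul_one, mul_one, sq_abs, sq_abs]
  field_simp
  ring

theorem norm_sub_smul_sq_of_norm_eq_one {F : Type*} [NormedAddCommGroup F]
    [InnerProductSpace ℝ F] {x y : F} (hx : ‖x‖ = 1) (hy : ‖y‖ = 1) (r : ℝ) :
    ‖x - r • y‖ ^ 2 = (1 - r) ^ 2 + r * ‖x - y‖ ^ 2 := by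
  rw [norm_sub_sq_real, norm_sub_sq_real, inner_smul_right, norm_smul, hx, hy,
    Real.norm_eq_abs, mul_one, sq_abs]
  ring

lemma poissonKernel_zero_real_mul_le {y z : ℂ} (hy : ‖y‖ = 1) (hz : ‖z‖ = 1)
    {r δ : ℝ} (hr₀ : 0 < r) (hr₁ : r < 1) (hδ : 0 < δ) (hδz : δ ≤ ‖z - y‖) :
    poissonKernel 0 (r * y) z ≤ (1 - r ^ 2) / (r * δ ^ 2) := by
  have hnorm : ‖z - r * y‖ ^ 2 = (1 - r) ^ 2 + r * ‖z - y‖ ^ 2 := by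
    rw [← Complex.real_smul]; exact norm_sub_smul_sq_of_norm_eq_one hz hy r
  have hsep : r * δ ^ 2 ≤ ‖z - r * y‖ ^ 2 := by
    rw [hnorm]; nlinarith [pow_le_pow_left₀ hδ.le hδz 2, sq_nonneg (1 - r)]
  rw [poissonKernel_zero_apply, hz, norm_mul, hy, Complex.norm_real, Real.norm_eq_abs,
    mul_one, sq_abs, one_pow]
  exact div_le_div_of_nonneg_left (by nlinarith) (by positivity) hsep

lemma abs_le_tsum_of_tsum_eq_zero {ι : Type*} {a b : ι → ℝ} (ha : Summable a)
    (hb : Summable b) (h₀ : ∑' j, a j = 0) {i : ι} (hab : ∀ j ≠ i, |a j| ≤ b j)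
    (hbi : 0 ≤ b i) : |a i| ≤ ∑' j, b j := by
  classical
  rw [ha.tsum_eq_add_tsum_ite i, add_eq_zero_iff_eq_neg] at h₀
  rw [h₀, abs_neg, ← Real.norm_eq_abs]
  refine tsum_of_norm_bounded hb.hasSum fun j => ?_
  split_ifs with hj
  · simpa [hj] using hbi
  · exact hab j hj

lemma StrictAnti.exists_pos_le_abs_sub {f : ℕ → ℝ} (hf : StrictAnti f) (n : ℕ) :
    ∃ δ > 0, ∀ m ≠ n, δ ≤ |f m - f n| := by
  rcases n with _ | k
  · refine ⟨f 0 - f 1, sub_pos.2 (hf zero_lt_one), fun m hm => ?_⟩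
    have := hf.antitone (Nat.one_le_iff_ne_zero.2 hm)
    rw [abs_sub_comm]; exact le_abs.2 (Or.inl (by linarith))
  · refine ⟨min (f k - f (k + 1)) (f (k + 1) - f (k + 2)),
      lt_min (sub_pos.2 (hf k.lt_succ_self)) (sub_pos.2 (hf (k + 1).lt_succ_self)),
      fun m hm => ?_⟩
    rcases Nat.lt_or_gt_of_ne hm with hlt | hgt
    · have := hf.antitone (Nat.le_of_lt_succ hlt)
      exact (min_le_left _ _).trans (le_abs.2 (Or.inl (by linarith)))
    · have := hf.antitone (Nat.succ_le_of_lt hgt)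
      exact (min_le_right _ _).trans (le_abs.2 (Or.inr (by linarith)))

section UnitCircle

variable {ι : Type*} {ζ : ι → ℂ}

lemma summable_mul_poissonKernel_zero (hζ : ∀ j, ‖ζ j‖ = 1) {γ : ι → ℝ} (hγ : Summable γ)
    {w : ℂ} (hw : ‖w‖ < 1) : Summable fun j => γ j * poissonKernel 0 w (ζ j) := by
  refine (hγ.abs.mul_right ((1 + ‖w‖) / (1 - ‖w‖))).of_norm_bounded fun j => ?_
  rw [Real.norm_eq_abs, abs_mul, abs_of_nonneg (poissonKernel_zero_nonneg (hζ j) hw.le)]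
  exact mul_le_mul_of_nonneg_left (poissonKernel_zero_le (hζ j) hw) (abs_nonneg _)

theorem eq_zero_of_tsum_mul_poissonKernel_zero_eq_zero (hζ : ∀ j, ‖ζ j‖ = 1) {γ : ι → ℝ}
    (hγ : Summable γ) (h₀ : ∀ w : ℂ, ‖w‖ < 1 → ∑' j, γ j * poissonKernel 0 w (ζ j) = 0)
    {i : ι} {δ : ℝ} (hδ : 0 < δ) (hsep : ∀ j ≠ i, δ ≤ ‖ζ j - ζ i‖) : γ i = 0 := by
  set S := ∑' j, |γ j|
  have hS : 0 ≤ S := tsum_nonneg fun j => abs_nonneg _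
  have hbound : ∀ r ∈ Ioo (0 : ℝ) 1, |γ i| ≤ S * (1 - r) ^ 2 / (r * δ ^ 2) := by
    rintro r ⟨hr₀, hr₁⟩
    have hw : ‖(r : ℂ) * ζ i‖ < 1 := by
      rwa [norm_mul, hζ i, Complex.norm_real, Real.norm_eq_abs, abs_of_pos hr₀, mul_one]
    have hK : 0 ≤ (1 - r ^ 2) / (r * δ ^ 2) := div_nonneg (by nlinarith) (by positivity)
    have key := abs_le_tsum_of_tsum_eq_zero (summable_mul_poissonKernel_zero hζ hγ hw)
      (hγ.abs.mul_right _) (h₀ _ hw) (i := i) (fun j hj => ?_) (mul_nonneg (abs_nonneg _) hK)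
    · rw [tsum_mul_right, abs_mul, poissonKernel_zero_real_mul_self (hζ i) hr₁,
        abs_of_pos (a := (1 + r) / (1 - r)) (by apply div_pos <;> linarith)] at key
      have h1r : 0 < 1 - r := by linarith
      calc |γ i| = |γ i| * ((1 + r) / (1 - r)) * ((1 - r) / (1 + r)) := by
            field_simp
        _ ≤ S * ((1 - r ^ 2) / (r * δ ^ 2)) * ((1 - r) / (1 + r)) :=
            mul_le_mul_of_nonneg_right key (by positivity)
        _ = S * (1 - r) ^ 2 / (r * δ ^ 2) := by
            field_simp
            ring
    · rw [abs_mul, abs_of_nonneg (poissonKernel_zero_nonneg (hζ j) hw.le)]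
      exact mul_le_mul_of_nonneg_left
        (poissonKernel_zero_real_mul_le (hζ i) (hζ j) hr₀ hr₁ hδ (hsep j hj)) (abs_nonneg _)
  have hlim : Tendsto (fun r : ℝ => S * (1 - r) ^ 2 / (r * δ ^ 2))
      (nhdsWithin 1 (Iio 1)) (nhds 0) := by
    have : ContinuousAt (fun r : ℝ => S * (1 - r) ^ 2 / (r * δ ^ 2)) 1 := by
      fun_prop (disch := positivity)
    simpa using this.tendsto.mono_left nhdsWithin_le_nhds
  have := ge_of_tendsto hlim (eventually_of_mem (Ioo_mem_nhdsLT zero_lt_one) hbound)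
  exact abs_nonpos_iff.1 this

end UnitCircle

lemma theta_strictMono : StrictMono theta := fun m n hmn => by
  have : ((1 : ℝ) / 2) ^ (n + 1) < (1 / 2) ^ (m + 1) :=
    pow_right_strictAnti₀ (by norm_num) (by norm_num) (Nat.succ_lt_succ hmn)
  unfold theta
  nlinarith [mul_lt_mul_of_pos_left this Real.pi_pos]

lemma theta_mem_Icc (n : ℕ) : theta n ∈ Icc 0 Real.pi := by
  have h₀ : (0 : ℝ) ≤ (1 / 2) ^ (n + 1) := by positivity
  have h₁ : ((1 : ℝ) / 2) ^ (n + 1) ≤ 1 := pow_le_one₀ (by norm_num) (by norm_num)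
  constructor <;> unfold theta <;> nlinarith [Real.pi_pos]

lemma norm_zeta (n : ℕ) : ‖zeta n‖ = 1 :=
  Complex.norm_exp_ofReal_mul_I _

lemma re_zeta_strictAnti : StrictAnti fun n => (zeta n).re := fun m n hmn => by
  simp only [zeta, Complex.exp_ofReal_mul_I_re]
  exact Real.strictAntiOn_cos (theta_mem_Icc m) (theta_mem_Icc n) (theta_strictMono hmn)

lemma exists_pos_le_norm_zeta_sub (n : ℕ) : ∃ δ > 0, ∀ m ≠ n, δ ≤ ‖zeta m - zeta n‖ := by
  obtain ⟨δ, hδ, hsep⟩ := re_zeta_strictAnti.exists_pos_le_abs_sub n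
  refine ⟨δ, hδ, fun m hm => (hsep m hm).trans ?_⟩
  simpa using Complex.abs_re_le_norm (zeta m - zeta n)

lemma uP_eq_poissonKernel (n : ℕ) (z : ℂ) : uP n z = poissonKernel 0 z (zeta n) := by
  simp [poissonKernel_eq_re_herglotzRieszKernel, herglotzRieszKernel_def, uP]

lemma eq_zero_of_tsum_mul_uP_eq_zero {γ : ℕ → ℝ} (hγ : Summable γ)
    (h₀ : ∀ z ∈ unitDisk, ∑' n, γ n * uP n z = 0) : γ = 0 := funext fun n => by
  obtain ⟨δ, hδ, hsep⟩ := exists_pos_le_norm_zeta_sub n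
  refine eq_zero_of_tsum_mul_poissonKernel_zero_eq_zero norm_zeta hγ (fun w hw => ?_) hδ hsep
  simpa only [uP_eq_poissonKernel] using h₀ w hw

/-- The linear map `ℓ¹ → (𝔻 → ℝ)`, `γ ↦ Σ γₙ uₙ`, is injective; in particular the
functions `u₁, u₂, u₃, …` are linearly independent over `ℝ` (as functions on `𝔻`). -/
theorem coefficient_map_injective :
    Function.Injective (fun γ : lp (fun _ : ℕ => ℝ) 1 =>
      unitDisk.restrict fun z : ℂ => ∑' n : ℕ, γ n * uP n z) ∧
    LinearIndependent ℝ (fun n : ℕ => unitDisk.restrict (uP n)) := by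
  constructor
  · intro γ γ' h
    have hγ := (lp.memℓp γ).summable_of_one
    have hγ' := (lp.memℓp γ').summable_of_one
    have hsub := eq_zero_of_tsum_mul_uP_eq_zero (hγ.sub hγ') fun z hz => by
      have hz' : ‖z‖ < 1 := hz
      have hu : ∑' n, γ n * uP n z = ∑' n, γ' n * uP n z := congrFun h ⟨z, hz⟩
      simp only [uP_eq_poissonKernel] at hu ⊢
      simp only [sub_mul]
      rw [(summable_mul_poissonKernel_zero norm_zeta hγ hz').tsum_sub
        (summable_mul_poissonKernel_zero norm_zeta hγ' hz'), hu, sub_self]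
    ext n
    exact sub_eq_zero.1 (congrFun hsub n)
  · rw [linearIndependent_iff]
    intro l hl
    ext n
    refine congrFun (eq_zero_of_tsum_mul_uP_eq_zero (summable_of_hasFiniteSupport
      l.hasFiniteSupport) fun z hz => ?_) n
    rw [tsum_eq_sum (s := l.support) fun m hm => by simp [Finsupp.notMem_support_iff.1 hm]]
    have hlz := congrFun hl ⟨z, hz⟩
    simp only [Finsupp.linearCombination_apply, Finsupp.sum, Finset.sum_apply, Pi.smul_apply,
      smul_eq_mul, Pi.zero_apply] at hlz
    exact hlz

end
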